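/- arXiv:0709.3535 — 5 statements merged into one kernel-verified Lean document; each statement's English description precedes it below -/
import Mathlib

section
/- Let M be a 4×4 real matrix with all entries strictly positive, whose row sums R1, R2, R3, R4 satisfy R1 ≥ R2 ≥ R3 > R4 > 0, and set δ = R3/R4 − 1 > 0. For any ε with 0 < ε < min(1/4, δ/2), let M' be the matrix obtained from M by multiplying every entry of the fourth row by (1+ε). Then L(M') > L(M). -/
/-!
Multiplying the last row by `1 + ε` multiplies the numerator of the likelihood by
`(1 + ε) ^ 10` (the exponents in that row sum to `4 + 3 * 2`) and raises the total
`S` to `S + ε R₄`. Since `R₃ = (1 + δ) R₄` and `R₁ ≥ R₂ ≥ R₃`, we have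
`S ≥ (4 + 3δ) R₄`, and for small `ε` this forces `(S + ε R₄) ^ 4 < (1 + ε) S ^ 4`,
i.e. the denominator grows by less than `(1 + ε) ^ 10`.
-/

open Finset

/-- The likelihood of the 100 Swiss Francs data table: diagonal counts 4,
off-diagonal counts 2. -/
noncomputable def swissL (M : Matrix (Fin 4) (Fin 4) ℝ) : ℝ :=
  (∏ i : Fin 4, ∏ j : Fin 4, M i j ^ (if i = j then 4 else 2)) /
    (∑ i : Fin 4, ∑ j : Fin 4, M i j) ^ 40

lemma add_pow_four_le {S x : ℝ} (hx : 0 ≤ x) (hxS : 16 * x ≤ S) :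
    (S + x) ^ 4 ≤ S ^ 4 + 4 * S ^ 3 * x + 7 * S ^ 2 * x ^ 2 := by
  have hS : 0 ≤ S := by linarith
  have h : 4 * S * x ^ 3 + x ^ 4 ≤ S ^ 2 * x ^ 2 := by
    nlinarith [mul_nonneg hx hS, mul_nonneg (mul_nonneg hx hx) (mul_nonneg hx hS),
      pow_nonneg hx 3, mul_le_mul_of_nonneg_left hxS (pow_nonneg hx 3),
      mul_le_mul_of_nonneg_left hxS (mul_nonneg (pow_nonneg hx 2) hS)]
  nlinarith [h]

lemma add_mul_pow_four_lt {S b δ ε : ℝ} (hb : 0 < b) (hε0 : 0 < ε) (hε : ε < 1 / 4)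
    (hεδ : ε < δ / 2) (hS : (4 + 3 * δ) * b ≤ S) :
    (S + ε * b) ^ 4 < (1 + ε) * S ^ 4 := by
  have hδ : 0 < δ := by linarith
  have hSb : 4 * b ≤ S := by nlinarith
  have hSpos : 0 < S := by linarith
  have hquad : 4 * S * b + 7 * ε * b ^ 2 < S ^ 2 := by
    nlinarith [mul_lt_mul_of_pos_right hεδ (mul_pos hb hb),
      mul_le_mul_of_nonneg_left hSb (mul_nonneg hδ.le hb.le),
      mul_le_mul_of_nonneg_left hS hSpos.le]
  calc (S + ε * b) ^ 4 ≤ S ^ 4 + 4 * S ^ 3 * (ε * b) + 7 * S ^ 2 * (ε * b) ^ 2 :=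
        add_pow_four_le (by positivity) (by nlinarith)
    _ = S ^ 4 + ε * S ^ 2 * (4 * S * b + 7 * ε * b ^ 2) := by ring
    _ < S ^ 4 + ε * S ^ 2 * S ^ 2 := by gcongr
    _ = (1 + ε) * S ^ 4 := by ring

section ScaledRow

variable {ι : Type*} [Fintype ι] [DecidableEq ι]

lemma prod_prod_pow_scaled_row (M : Matrix ι ι ℝ) (e : ι → ι → ℕ) (k : ι) (c : ℝ) :
    ∏ i, ∏ j, (if i = k then c * M i j else M i j) ^ e i j
      = c ^ (∑ j, e k j) * ∏ i, ∏ j, M i j ^ e i j := by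
  have h : ∀ i j, (if i = k then c * M i j else M i j) ^ e i j
      = (if i = k then c ^ e i j else 1) * M i j ^ e i j := by
    intro i j; split_ifs <;> simp [mul_pow]
  simp_rw [h, prod_mul_distrib, prod_ite_irrel, prod_const_one, prod_ite_eq', mem_univ, if_true,
    prod_pow_eq_pow_sum]

lemma sum_sum_scaled_row (M : Matrix ι ι ℝ) (k : ι) (c : ℝ) :
    ∑ i, ∑ j, (if i = k then c * M i j else M i j)
      = ∑ i, ∑ j, M i j + (c - 1) * ∑ j, M k j := by
  have h : ∀ i j, (if i = k then c * M i j else M i j)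
      = M i j + if i = k then (c - 1) * M i j else 0 := by
    intro i j; split_ifs <;> ring
  simp_rw [h, sum_add_distrib, sum_ite_irrel, sum_const_zero, sum_ite_eq', mem_univ, if_true,
    mul_sum]

end ScaledRow

theorem scaling_last_row_increases_likelihood_general
    (M : Matrix (Fin 4) (Fin 4) ℝ) (hpos : ∀ i j, 0 < M i j)
    (R : Fin 4 → ℝ) (hR : ∀ i, R i = ∑ j, M i j)
    (h12 : R 1 ≤ R 0) (h23 : R 2 ≤ R 1) (h4 : 0 < R 3)
    (δ : ℝ) (hδ : δ = R 2 / R 3 - 1)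
    (ε : ℝ) (hε0 : 0 < ε) (hε : ε < min (1/4) (δ/2))
    (M' : Matrix (Fin 4) (Fin 4) ℝ)
    (hM' : ∀ i j, M' i j = if i = 3 then (1 + ε) * M i j else M i j) :
    swissL M < swissL M' := by
  set P := ∏ i : Fin 4, ∏ j : Fin 4, M i j ^ (if i = j then 4 else 2)
  set S := ∑ i : Fin 4, ∑ j : Fin 4, M i j
  have hP : 0 < P := prod_pos fun i _ ↦ prod_pos fun j _ ↦ pow_pos (hpos i j) _
  have hS0 : 0 < S :=
    sum_pos (fun i _ ↦ sum_pos (fun j _ ↦ hpos i j) univ_nonempty) univ_nonempty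
  have hS : S = R 0 + R 1 + R 2 + R 3 := by simp only [S, hR, Fin.sum_univ_four]
  have hR2 : R 2 = (1 + δ) * R 3 := by rw [hδ]; field_simp; ring
  have hL' : swissL M' = (1 + ε) ^ 10 * P / (S + ε * R 3) ^ 40 := by
    rw [swissL]
    simp only [hM']
    have hdeg : (∑ j : Fin 4, if (3 : Fin 4) = j then 4 else 2) = 10 := by decide
    rw [prod_prod_pow_scaled_row, sum_sum_scaled_row, hdeg, ← hR, add_sub_cancel_left]
  have hquartic : (S + ε * R 3) ^ 4 < (1 + ε) * S ^ 4 :=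
    add_mul_pow_four_lt h4 hε0 (lt_min_iff.mp hε).1 (lt_min_iff.mp hε).2 (by rw [hS]; linarith)
  have hdeg40 : (S + ε * R 3) ^ 40 < (1 + ε) ^ 10 * S ^ 40 := by
    calc (S + ε * R 3) ^ 40 = ((S + ε * R 3) ^ 4) ^ 10 := by ring
      _ < ((1 + ε) * S ^ 4) ^ 10 := by gcongr
      _ = (1 + ε) ^ 10 * S ^ 40 := by ring
  rw [hL', swissL, div_lt_div_iff₀ (by positivity) (by positivity)]
  calc P * (S + ε * R 3) ^ 40 < P * ((1 + ε) ^ 10 * S ^ 40) := by gcongr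
    _ = (1 + ε) ^ 10 * P * S ^ 40 := by ring

theorem scaling_last_row_increases_likelihood
    (M : Matrix (Fin 4) (Fin 4) ℝ) (hpos : ∀ i j, 0 < M i j)
    (R : Fin 4 → ℝ) (hR : ∀ i, R i = ∑ j, M i j)
    (h12 : R 1 ≤ R 0) (h23 : R 2 ≤ R 1) (h34 : R 3 < R 2) (h4 : 0 < R 3)
    (δ : ℝ) (hδ : δ = R 2 / R 3 - 1)
    (ε : ℝ) (hε0 : 0 < ε) (hε : ε < min (1/4) (δ/2))
    (M' : Matrix (Fin 4) (Fin 4) ℝ)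
    (hM' : ∀ i j, M' i j = if i = 3 then (1 + ε) * M i j else M i j) :
    swissL M < swissL M' :=
  scaling_last_row_increases_likelihood_general M hpos R hR h12 h23 h4 δ hδ ε hε0 hε M' hM'
end

section
/- Let M be a 4×4 real matrix with nonnegative entries, of rank at most 2, with ∑_{i,j} M_{ij} > 0, such that L(M) ≥ L(N) for every 4×4 real matrix N with nonnegative entries and rank at most 2. Then all four row sums of M are equal and all four column sums of M are equal. -/
/-!
Scaling the rows of a nonnegative matrix by positive factors `d k` preserves nonnegativity and
rank. Every row of the table has total count `4 + 3 * 2 = 10`, so a scaling that keeps the grand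
total fixed multiplies `L` by `(∏ k, d k) ^ 10`. If two row sums `a ≠ b` differ, rescaling both
rows to the common sum `(a + b) / 2` keeps the total and gives `∏ k, d k = (a + b)² / 4ab > 1`,
contradicting maximality (`L(M) > 0` by comparison with the all-ones matrix). The table is
symmetric, so `L` is invariant under transposition, and columns follow from rows.
-/

open Finset

open Matrix

section NonnegRankLe

variable {m n : Type*} [Fintype m] [Fintype n]

def nonnegMatricesOfRankLe (r : ℕ) : Set (Matrix m n ℝ) :=
  {N | (∀ i j, 0 ≤ N i j) ∧ N.rank ≤ r}

theorem diagonal_mul_mem_nonnegMatricesOfRankLe [DecidableEq m] {r : ℕ} {M : Matrix m n ℝ}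
    {d : m → ℝ} (hd : ∀ k, 0 ≤ d k) (hM : M ∈ nonnegMatricesOfRankLe r) :
    diagonal d * M ∈ nonnegMatricesOfRankLe r :=
  ⟨fun i j => by simpa [diagonal_mul] using mul_nonneg (hd i) (hM.1 i j),
    (rank_mul_le_right _ _).trans hM.2⟩

theorem transpose_mem_nonnegMatricesOfRankLe {r : ℕ} {M : Matrix m n ℝ}
    (hM : M ∈ nonnegMatricesOfRankLe r) : Mᵀ ∈ nonnegMatricesOfRankLe r :=
  ⟨fun i j => hM.1 j i, (rank_transpose M).le.trans hM.2⟩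

end NonnegRankLe

theorem exists_scaling_sum_eq_prod_gt_one {ι : Type*} [Fintype ι] [DecidableEq ι]
    {r : ι → ℝ} {i i' : ι} (hi : 0 < r i) (hi' : 0 < r i') (hne : r i ≠ r i') :
    ∃ d : ι → ℝ, (∀ k, 0 < d k) ∧ ∑ k, d k * r k = ∑ k, r k ∧ 1 < ∏ k, d k := by
  have hii' : i ≠ i' := fun h => hne (h ▸ rfl)
  let d : ι → ℝ := fun k =>
    if k = i then (r i + r i') / (2 * r i) else if k = i' then (r i + r i') / (2 * r i') else 1
  have hpair : ({i, i'} : Finset ι) ⊆ univ := subset_univ _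
  have hrest : ∀ k ∈ univ \ {i, i'}, d k = 1 := fun k hk => by
    simp only [mem_sdiff, mem_univ, mem_insert, mem_singleton, true_and, not_or] at hk
    simp [d, hk.1, hk.2]
  refine ⟨d, fun k => by dsimp only [d]; split_ifs <;> positivity, ?_, ?_⟩
  · rw [← sum_sdiff hpair, ← sum_sdiff hpair (f := r), sum_pair hii', sum_pair hii',
      sum_congr rfl fun k hk => by rw [hrest k hk, one_mul]]
    simp only [d, if_neg hii'.symm, ↓reduceIte]
    field_simp
    ring
  · rw [← prod_sdiff hpair, prod_pair hii', prod_eq_one hrest, one_mul]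
    simp only [d, if_neg hii'.symm, ↓reduceIte]
    rw [div_mul_div_comm, one_lt_div (by positivity)]
    nlinarith [sq_pos_of_ne_zero (sub_ne_zero.mpr hne)]

theorem swissL_transpose (M : Matrix (Fin 4) (Fin 4) ℝ) : swissL Mᵀ = swissL M := by
  simp only [swissL, transpose_apply]
  rw [prod_comm, sum_comm]
  simp only [eq_comm]

theorem swissL_diagonal_mul {M : Matrix (Fin 4) (Fin 4) ℝ} {d : Fin 4 → ℝ}
    (hd : ∑ k, d k * ∑ j, M k j = ∑ i, ∑ j, M i j) :
    swissL (diagonal d * M) = (∏ k, d k) ^ 10 * swissL M := by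
  have hrow : ∀ k : Fin 4, (∑ j : Fin 4, if k = j then 4 else 2 : ℕ) = 10 := by decide
  simp only [swissL, diagonal_mul, ← mul_sum, hd, mul_pow, prod_mul_distrib,
    prod_pow_eq_pow_sum, hrow, prod_pow, mul_div_assoc]

theorem swissL_pos_of_isMaxOn {M : Matrix (Fin 4) (Fin 4) ℝ}
    (hmax : IsMaxOn swissL (nonnegMatricesOfRankLe 2) M) : 0 < swissL M := by
  have hones : (vecMulVec 1 1 : Matrix (Fin 4) (Fin 4) ℝ) ∈ nonnegMatricesOfRankLe 2 :=
    ⟨fun i j => by simp [vecMulVec_apply], (rank_vecMulVec_le _ _).trans (by norm_num)⟩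
  refine lt_of_lt_of_le ?_ (isMaxOn_iff.mp hmax _ hones)
  simp only [swissL, vecMulVec_apply, Pi.one_apply, mul_one, one_pow, prod_const_one]
  positivity

theorem ne_zero_of_swissL_ne_zero {M : Matrix (Fin 4) (Fin 4) ℝ} (hL : swissL M ≠ 0)
    (i j : Fin 4) : M i j ≠ 0 := by
  intro hij
  have hfactor : M i j ^ (if i = j then 4 else 2) = 0 := by
    rw [hij]
    split_ifs <;> norm_num
  exact hL (by rw [swissL, prod_eq_zero (mem_univ i) (prod_eq_zero (mem_univ j) hfactor), zero_div])

theorem sum_row_eq_of_isMaxOn {M : Matrix (Fin 4) (Fin 4) ℝ}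
    (hM : M ∈ nonnegMatricesOfRankLe 2) (hmax : IsMaxOn swissL (nonnegMatricesOfRankLe 2) M)
    (i i' : Fin 4) : ∑ j, M i j = ∑ j, M i' j := by
  by_contra hne
  have hL := swissL_pos_of_isMaxOn hmax
  have hrow : ∀ k, 0 < ∑ j, M k j := fun k =>
    sum_pos (fun j _ => (hM.1 k j).lt_of_ne' (ne_zero_of_swissL_ne_zero hL.ne' k j))
      univ_nonempty
  obtain ⟨d, hd, hsum, hprod⟩ :=
    exists_scaling_sum_eq_prod_gt_one (r := fun k => ∑ j, M k j) (hrow i) (hrow i') hne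
  have hle := isMaxOn_iff.mp hmax _
    (diagonal_mul_mem_nonnegMatricesOfRankLe (fun k => (hd k).le) hM)
  rw [swissL_diagonal_mul hsum] at hle
  exact hle.not_gt (lt_mul_of_one_lt_left hL (one_lt_pow₀ hprod (by norm_num)))

theorem maximizer_has_equal_marginals_general
    (M : Matrix (Fin 4) (Fin 4) ℝ)
    (hnonneg : ∀ i j, 0 ≤ M i j)
    (hrank : M.rank ≤ 2)
    (hmax : ∀ N : Matrix (Fin 4) (Fin 4) ℝ,
      (∀ i j, 0 ≤ N i j) → N.rank ≤ 2 → swissL N ≤ swissL M) :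
    (∀ i i' : Fin 4, ∑ j, M i j = ∑ j, M i' j) ∧
    (∀ j j' : Fin 4, ∑ i, M i j = ∑ i, M i j') := by
  have hM : M ∈ nonnegMatricesOfRankLe 2 := ⟨hnonneg, hrank⟩
  have hmaxOn : IsMaxOn swissL (nonnegMatricesOfRankLe 2) M :=
    isMaxOn_iff.mpr fun N hN => hmax N hN.1 hN.2
  have hmaxOnT : IsMaxOn swissL (nonnegMatricesOfRankLe 2) Mᵀ :=
    isMaxOn_iff.mpr fun N hN => (swissL_transpose M).symm ▸ hmax N hN.1 hN.2
  exact ⟨sum_row_eq_of_isMaxOn hM hmaxOn,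
    sum_row_eq_of_isMaxOn (transpose_mem_nonnegMatricesOfRankLe hM) hmaxOnT⟩

theorem maximizer_has_equal_marginals
    (M : Matrix (Fin 4) (Fin 4) ℝ)
    (hnonneg : ∀ i j, 0 ≤ M i j)
    (hrank : M.rank ≤ 2)
    (hsum : 0 < ∑ i : Fin 4, ∑ j : Fin 4, M i j)
    (hmax : ∀ N : Matrix (Fin 4) (Fin 4) ℝ,
      (∀ i j, 0 ≤ N i j) → N.rank ≤ 2 → swissL N ≤ swissL M) :
    (∀ i i' : Fin 4, ∑ j, M i j = ∑ j, M i' j) ∧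
    (∀ j j' : Fin 4, ∑ i, M i j = ∑ i, M i j') :=
  maximizer_has_equal_marginals_general M hnonneg hrank hmax
end

section
/- Let M be a 4×4 real matrix of rank at most 2 and let K be a nonzero real number such that every row sum of M equals 4K and every column sum of M equals 4K. Then there exist vectors e = (e1,e2,e3,e4) and f = (f1,f2,f3,f4) in ℝ⁴ with e1+e2+e3+e4 = 0 and f1+f2+f3+f4 = 0 such that M_{ij} = K + e_i·f_j for all i, j. In particular, K equals the average entry of M. -/
/-!
Let `N = M - K·J` with `J` the all-ones matrix; its row and column sums vanish. Since the row
sums of `M` are `4K ≠ 0`, the all-ones vector `1` lies in the range of `M`, hence so does the range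
of `N`. But every vector in the range of `N` has coordinate sum zero, so `1` is not in it and
`rank N < rank M ≤ 2`. Thus `N = e fᵀ`, and the vanishing row and column sums of `e fᵀ` force
`∑ e = 0` and `∑ f = 0` unless `N = 0`.
-/

open Finset

namespace Matrix

variable {m n R : Type*} [Fintype n] [Field R]

theorem exists_eq_vecMulVec_of_rank_le_one {A : Matrix m n R} (hA : A.rank ≤ 1) :
    ∃ v w, A = vecMulVec v w := by
  classical
  obtain ⟨v, hv⟩ := (Submodule.finrank_le_one_iff_isPrincipal _).mp hA
  have hcol : ∀ j, ∃ c : R, c • v = A.col j := fun j => by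
    rw [← Submodule.mem_span_singleton, ← hv, ← mulVec_single_one]
    exact LinearMap.mem_range_self _ _
  choose w hw using hcol
  refine ⟨v, w, ext fun i j => ?_⟩
  rw [vecMulVec_apply, mul_comm, ← smul_eq_mul, ← Pi.smul_apply, hw, col_apply]

theorem exists_eq_vecMulVec_sum_eq_zero_of_rank_le_one [Fintype m] {A : Matrix m n R}
    (hA : A.rank ≤ 1) (hrow : ∀ i, ∑ j, A i j = 0) (hcol : ∀ j, ∑ i, A i j = 0) :
    ∃ v w, ∑ i, v i = 0 ∧ ∑ j, w j = 0 ∧ A = vecMulVec v w := by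
  obtain ⟨v, w, rfl⟩ := exists_eq_vecMulVec_of_rank_le_one hA
  by_cases hzero : vecMulVec v w = 0
  · exact ⟨0, 0, by simp, by simp, by simpa using hzero⟩
  obtain ⟨i, j, hij⟩ : ∃ i j, v i * w j ≠ 0 := by
    by_contra! h
    exact hzero (ext h)
  refine ⟨v, w, ?_, ?_, rfl⟩
  · have hsum : (∑ i, v i) * w j = 0 := by simpa [vecMulVec_apply, sum_mul] using hcol j
    exact (mul_eq_zero.mp hsum).resolve_right (right_ne_zero_of_mul hij)
  · have hsum : v i * ∑ j, w j = 0 := by simpa [vecMulVec_apply, mul_sum] using hrow i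
    exact (mul_eq_zero.mp hsum).resolve_left (left_ne_zero_of_mul hij)

theorem rank_sub_const_lt [Fintype m] (M : Matrix m n R) {c K : R} (hc : c ≠ 0)
    (hm : (Fintype.card m : R) ≠ 0) (hrow : ∀ i, ∑ j, M i j = c)
    (hcol : ∀ j, ∑ i, M i j = Fintype.card m * K) :
    (M - of fun _ _ => K).rank < M.rank := by
  set N := M - of fun _ _ => K
  set u : n → R := fun _ => c⁻¹
  have hM_u : M *ᵥ u = 1 := funext fun i => by
    simp [u, mulVec, dotProduct, ← sum_mul, hrow i, hc]
  have hN_mulVec : ∀ x, N *ᵥ x = M *ᵥ (x - (K * ∑ j, x j) • u) := fun x => by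
    rw [mulVec_sub, mulVec_smul, hM_u, sub_mulVec]
    ext i
    simp [mulVec, dotProduct, mul_sum]
  have hN_colSum : 1 ᵥ* N = 0 := funext fun j => by
    simp [N, vecMul, dotProduct, sum_sub_distrib, hcol j]
  have hle : LinearMap.range N.mulVecLin ≤ LinearMap.range M.mulVecLin := by
    rintro _ ⟨x, rfl⟩
    exact ⟨_, (hN_mulVec x).symm⟩
  have hone_mem : (1 : m → R) ∈ LinearMap.range M.mulVecLin := ⟨u, hM_u⟩
  have hone_not_mem : (1 : m → R) ∉ LinearMap.range N.mulVecLin := by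
    rintro ⟨x, hx⟩
    have h := dotProduct_mulVec 1 N x
    rw [← mulVecLin_apply, hx, hN_colSum, zero_dotProduct, one_dotProduct_one] at h
    exact hm h
  exact Submodule.finrank_lt_finrank_of_lt
    (SetLike.lt_iff_le_and_exists.mpr ⟨hle, 1, hone_mem, hone_not_mem⟩)

end Matrix

theorem rank_two_equal_marginals_parametrization
    (M : Matrix (Fin 4) (Fin 4) ℝ) (K : ℝ) (hK : K ≠ 0)
    (hrank : M.rank ≤ 2)
    (hrow : ∀ i, ∑ j, M i j = 4 * K)
    (hcol : ∀ j, ∑ i, M i j = 4 * K) :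
    (∃ e f : Fin 4 → ℝ,
      (∑ i, e i = 0) ∧ (∑ i, f i = 0) ∧ ∀ i j, M i j = K + e i * f j) ∧
    K = (∑ i : Fin 4, ∑ j : Fin 4, M i j) / 16 := by
  have hrank_lt := M.rank_sub_const_lt (c := 4 * K) (by positivity) (by norm_num) hrow
    (by simpa using hcol)
  set N := M - Matrix.of fun _ _ => K
  obtain ⟨e, f, he, hf, hN⟩ := N.exists_eq_vecMulVec_sum_eq_zero_of_rank_le_one (by omega)
    (fun i => by simp [N, sum_sub_distrib, hrow i])
    (fun j => by simp [N, sum_sub_distrib, hcol j])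
  refine ⟨⟨e, f, he, hf, fun i j => ?_⟩, by simp [hrow]; ring⟩
  have hNij := congrFun (congrFun hN i) j
  simp only [Matrix.sub_apply, Matrix.of_apply, Matrix.vecMulVec_apply, N] at hNij
  linarith
end

section
/- Let M be a 4×4 real matrix with nonnegative entries, of rank at most 2, with ∑_{i,j} M_{ij} > 0, such that L(M) ≥ L(N) for every 4×4 real matrix N with nonnegative entries and rank at most 2. Suppose M_{kl} = K + e_k·f_l for all k, l, where K is a nonzero real number and e, f ∈ ℝ⁴ have coordinates summing to 0. If e_i = e_j for some indices i, j, then f_i = f_j. -/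
/-!
A maximizer beats the block matrix `swissBlock`, so `L(M) > 0` and every entry of `M` is
positive. Since `e i = e j`, rows `i` and `j` of `M` agree, so swapping columns `i` and `j` of `M`
is the same as conjugating it by the transposition `(i j)`, which preserves `L`. The average of
`M` and its column swap is `M` times a matrix, so it still has rank at most 2; it has the same
total, and by AM-GM entrywise its numerator is strictly larger unless columns `i` and `j` of `M`
already agree. Hence `e k * f i = e k * f j` for all `k`. If `f i ≠ f j` this forces `e = 0`,
and then `M` is constant, with `L(M) = 16⁻⁴⁰ < L(swissBlock)`.
-/

open Finset

open Matrix

theorem prod_pow_mul_prod_pow_lt_sq_prod_midpoint_pow {ι : Type*} [Fintype ι] {a b : ι → ℝ}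
    (n : ι → ℕ) (ha : ∀ x, 0 < a x) (hb : ∀ x, 0 < b x) {x₀ : ι} (hne : a x₀ ≠ b x₀)
    (hn : n x₀ ≠ 0) :
    (∏ x, a x ^ n x) * ∏ x, b x ^ n x < (∏ x, ((a x + b x) / 2) ^ n x) ^ 2 := by
  have hmid : ∀ x, a x * b x ≤ ((a x + b x) / 2) ^ 2 := fun x => by
    nlinarith [sq_nonneg (a x - b x)]
  have hmid₀ : a x₀ * b x₀ < ((a x₀ + b x₀) / 2) ^ 2 := by
    nlinarith [sq_pos_of_ne_zero (sub_ne_zero.2 hne)]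
  simp only [← prod_mul_distrib, ← prod_pow, ← mul_pow, pow_right_comm _ (n _) 2]
  exact prod_lt_prod (fun x _ => pow_pos (mul_pos (ha x) (hb x)) _)
    (fun x _ => pow_le_pow_left₀ (mul_pos (ha x) (hb x)).le (hmid x) _)
    ⟨x₀, mem_univ _, pow_lt_pow_left₀ hmid₀ (mul_pos (ha x₀) (hb x₀)).le hn⟩

theorem Matrix.mul_swap_eq_submatrix {R m n : Type*} [Semiring R] [Fintype n] [DecidableEq n]
    (M : Matrix m n R) (i j : n) : M * swap R i j = M.submatrix id (Equiv.swap i j) := by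
  simp [swap, PEquiv.mul_toMatrix_toPEquiv]

section SwapColsMidpoint

variable {m n : Type*} [Fintype n] [DecidableEq n]

noncomputable def swapColsMidpoint (M : Matrix m n ℝ) (i j : n) : Matrix m n ℝ :=
  (1 / 2 : ℝ) • (M + M * swap ℝ i j)

theorem swapColsMidpoint_apply (M : Matrix m n ℝ) (i j : n) (k : m) (l : n) :
    swapColsMidpoint M i j k l = (M k l + M k (Equiv.swap i j l)) / 2 := by
  simp [swapColsMidpoint, mul_swap_eq_submatrix]
  ring

theorem rank_swapColsMidpoint_le (M : Matrix m n ℝ) (i j : n) :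
    (swapColsMidpoint M i j).rank ≤ M.rank := by
  have h : swapColsMidpoint M i j = M * ((1 / 2 : ℝ) • (1 + swap ℝ i j)) := by
    rw [swapColsMidpoint, Matrix.mul_smul, Matrix.mul_add, Matrix.mul_one]
  exact h ▸ rank_mul_le_left _ _

theorem sum_sum_swapColsMidpoint [Fintype m] (M : Matrix m n ℝ) (i j : n) :
    ∑ k, ∑ l, swapColsMidpoint M i j k l = ∑ k, ∑ l, M k l := by
  simp only [swapColsMidpoint_apply, ← sum_div, sum_add_distrib]
  simp only [fun k => Equiv.sum_comp (Equiv.swap i j) (M k)]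
  ring

end SwapColsMidpoint

noncomputable def swissNum (M : Matrix (Fin 4) (Fin 4) ℝ) : ℝ :=
  ∏ i : Fin 4, ∏ j : Fin 4, M i j ^ (if i = j then 4 else 2)

theorem swissL_eq_swissNum_div (M : Matrix (Fin 4) (Fin 4) ℝ) :
    swissL M = swissNum M / (∑ i, ∑ j, M i j) ^ 40 := rfl

theorem swissNum_submatrix (M : Matrix (Fin 4) (Fin 4) ℝ) (σ : Equiv.Perm (Fin 4)) :
    swissNum (M.submatrix σ σ) = swissNum M := by
  symm
  calc swissNum M = ∏ i, ∏ j, M (σ i) (σ j) ^ (if σ i = σ j then 4 else 2) := by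
        rw [swissNum, ← Equiv.prod_comp σ]
        exact prod_congr rfl fun i _ => (Equiv.prod_comp σ _).symm
    _ = swissNum (M.submatrix σ σ) := by simp [swissNum, σ.injective.eq_iff]

theorem swissL_eq_zero_of_apply_eq_zero {M : Matrix (Fin 4) (Fin 4) ℝ} {k l : Fin 4}
    (h : M k l = 0) : swissL M = 0 := by
  rw [swissL_eq_swissNum_div, swissNum,
    prod_eq_zero (mem_univ k) (prod_eq_zero (mem_univ l) (by simp [h])), zero_div]

theorem swissL_lt_swissL_swapColsMidpoint {M : Matrix (Fin 4) (Fin 4) ℝ}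
    (hpos : ∀ k l, 0 < M k l) {i j : Fin 4} (hrow : M i = M j) {k : Fin 4}
    (hcol : M k i ≠ M k j) : swissL M < swissL (swapColsMidpoint M i j) := by
  have hrows : ∀ k, M (Equiv.swap i j k) = M k := fun k => by
    rw [Equiv.swap_apply_def]; split_ifs <;> simp_all
  have hconj : M * swap ℝ i j = M.submatrix (Equiv.swap i j) (Equiv.swap i j) := by
    ext k l; simp [mul_swap_eq_submatrix, hrows]
  have hnum : swissNum M ^ 2 < swissNum (swapColsMidpoint M i j) ^ 2 := by
    calc swissNum M ^ 2 = swissNum M * swissNum (M * swap ℝ i j) := by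
          rw [hconj, swissNum_submatrix, sq]
      _ < swissNum (swapColsMidpoint M i j) ^ 2 := by
          simp only [swissNum, ← Fintype.prod_prod_type', swapColsMidpoint_apply,
            mul_swap_eq_submatrix, submatrix_apply, id]
          refine prod_pow_mul_prod_pow_lt_sq_prod_midpoint_pow _ (fun p => hpos _ _)
            (fun p => hpos _ _) (x₀ := (k, i)) (by simpa using hcol) (by split_ifs <;> norm_num)
  have hN : 0 ≤ swissNum (swapColsMidpoint M i j) := by
    simp only [swissNum, swapColsMidpoint_apply]
    exact prod_nonneg fun k _ => prod_nonneg fun l _ =>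
      pow_nonneg (by linarith [hpos k l, hpos k (Equiv.swap i j l)]) _
  have hsum : 0 < ∑ k, ∑ l, M k l :=
    sum_pos (fun k _ => sum_pos (fun l _ => hpos k l) univ_nonempty) univ_nonempty
  rw [swissL_eq_swissNum_div, swissL_eq_swissNum_div, sum_sum_swapColsMidpoint]
  exact div_lt_div_of_pos_right (lt_of_pow_lt_pow_left₀ 2 hN hnum) (pow_pos hsum 40)

/-- Up to scaling, the maximum likelihood estimate of rank at most 2 for the 100 Swiss Francs
table. -/
def swissBlock : Matrix (Fin 4) (Fin 4) ℝ := !![3, 3, 2, 2; 3, 3, 2, 2; 2, 2, 3, 3; 2, 2, 3, 3]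

theorem swissBlock_nonneg : ∀ i j, 0 ≤ swissBlock i j := by
  intro i j; fin_cases i <;> fin_cases j <;> norm_num [swissBlock]

theorem rank_swissBlock_le : swissBlock.rank ≤ 2 := by
  have h : swissBlock = (!![1, 0; 1, 0; 0, 1; 0, 1] : Matrix (Fin 4) (Fin 2) ℝ) *
      (!![3, 3, 2, 2; 2, 2, 3, 3] : Matrix (Fin 2) (Fin 4) ℝ) := by
    ext i j; fin_cases i <;> fin_cases j <;> simp [swissBlock, mul_apply]
  exact h ▸ (rank_mul_le_right _ _).trans (rank_le_height _)

theorem swissL_swissBlock : swissL swissBlock = 3 ^ 24 * 2 ^ 16 / 40 ^ 40 := by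
  simp [swissL, swissBlock, Fin.prod_univ_four, Fin.sum_univ_four]
  norm_num

theorem swissL_const_lt_swissL_swissBlock (K : ℝ) :
    swissL (of fun _ _ => K) < swissL swissBlock := by
  have hconst : swissL (of fun _ _ => K) = K ^ 40 / (16 * K) ^ 40 := by
    simp [swissL, Fin.prod_univ_four]
    ring
  rw [hconst, swissL_swissBlock]
  rcases eq_or_ne K 0 with rfl | hK
  · norm_num
  · rw [mul_pow, div_mul_cancel_right₀ (pow_ne_zero _ hK)]
    norm_num

theorem maximizer_equal_e_implies_equal_f_general
    (M : Matrix (Fin 4) (Fin 4) ℝ)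
    (hnonneg : ∀ i j, 0 ≤ M i j)
    (hrank : M.rank ≤ 2)
    (hmax : ∀ N : Matrix (Fin 4) (Fin 4) ℝ,
      (∀ i j, 0 ≤ N i j) → N.rank ≤ 2 → swissL N ≤ swissL M)
    (K : ℝ) (e f : Fin 4 → ℝ)
    (hM : ∀ k l, M k l = K + e k * f l)
    (i j : Fin 4) (hij : e i = e j) :
    f i = f j := by
  have hblock := hmax _ swissBlock_nonneg rank_swissBlock_le
  have hpos : ∀ k l, 0 < M k l := fun k l => (hnonneg k l).lt_of_ne' fun h =>
    (swissL_eq_zero_of_apply_eq_zero h ▸ hblock).not_gt (by rw [swissL_swissBlock]; positivity)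
  have hcol : ∀ k, M k i = M k j := by
    by_contra! ⟨k, hk⟩
    have hrow : M i = M j := funext fun l => by rw [hM, hM, hij]
    refine (swissL_lt_swissL_swapColsMidpoint hpos hrow hk).not_ge
      (hmax _ (fun k l => ?_) ((rank_swapColsMidpoint_le M i j).trans hrank))
    rw [swapColsMidpoint_apply]
    linarith [hnonneg k l, hnonneg k (Equiv.swap i j l)]
  by_contra hfij
  have he : ∀ k, e k = 0 := fun k =>
    (mul_eq_mul_left_iff.1 (by linarith [hM k i, hM k j, hcol k])).resolve_left hfij
  have hconst : M = of fun _ _ => K := by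
    ext k l; simp [hM, he]
  exact (swissL_const_lt_swissL_swissBlock K).not_ge (hconst ▸ hblock)

theorem maximizer_equal_e_implies_equal_f
    (M : Matrix (Fin 4) (Fin 4) ℝ)
    (hnonneg : ∀ i j, 0 ≤ M i j)
    (hrank : M.rank ≤ 2)
    (hsum : 0 < ∑ i : Fin 4, ∑ j : Fin 4, M i j)
    (hmax : ∀ N : Matrix (Fin 4) (Fin 4) ℝ,
      (∀ i j, 0 ≤ N i j) → N.rank ≤ 2 → swissL N ≤ swissL M)
    (K : ℝ) (hK : K ≠ 0) (e f : Fin 4 → ℝ)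
    (he : ∑ k, e k = 0) (hf : ∑ k, f k = 0)
    (hM : ∀ k l, M k l = K + e k * f l)
    (i j : Fin 4) (hij : e i = e j) :
    f i = f j :=
  maximizer_equal_e_implies_equal_f_general M hnonneg hrank hmax K e f hM i j hij
end

section
/- Every 2×2 real matrix P with nonnegative entries summing to 1 lies in the latent class model with r = 2 classes: there exist λ ∈ [0,1], probability vectors a, b, c, d ∈ ℝ² (entries nonnegative and summing to 1) such that P_{ij} = λ·a_i·b_j + (1−λ)·c_i·d_j for all i, j ∈ {1,2}. -/
/-! Split `P` by rows: with `λ` the mass of the first row, class 1 puts all its row mass on the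
first row and class 2 on the second, and the column distributions `b`, `d` are the normalized
rows of `P`. -/

open Finset

theorem exists_mem_stdSimplex_eq_sum_smul {𝕜 ι : Type*} [Field 𝕜] [LinearOrder 𝕜]
    [IsStrictOrderedRing 𝕜] [Fintype ι] [Nonempty ι] {v : ι → 𝕜} (hv : ∀ i, 0 ≤ v i) :
    ∃ q ∈ stdSimplex 𝕜 ι, v = (∑ i, v i) • q := by
  classical
  by_cases hs : ∑ i, v i = 0
  · refine ⟨_, single_mem_stdSimplex 𝕜 (Classical.arbitrary ι), ?_⟩
    rw [hs, zero_smul]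
    exact funext ((Finset.sum_eq_zero_iff_of_nonneg fun i _ => hv i).1 hs · (mem_univ _))
  · refine ⟨(∑ i, v i)⁻¹ • v, ⟨fun i => ?_, ?_⟩, ?_⟩
    · exact smul_nonneg (inv_nonneg.2 (sum_nonneg fun i _ => hv i)) (hv i)
    · simp only [Pi.smul_apply, smul_eq_mul, ← mul_sum, inv_mul_cancel₀ hs]
    · rw [smul_smul, mul_inv_cancel₀ hs, one_smul]

theorem two_by_two_latent_class_model_fills_simplex
    (P : Matrix (Fin 2) (Fin 2) ℝ)
    (hnonneg : ∀ i j, 0 ≤ P i j)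
    (hsum : ∑ i : Fin 2, ∑ j : Fin 2, P i j = 1) :
    ∃ (lam : ℝ) (a b c d : Fin 2 → ℝ),
      0 ≤ lam ∧ lam ≤ 1 ∧
      (∀ i, 0 ≤ a i) ∧ (∑ i, a i = 1) ∧
      (∀ i, 0 ≤ b i) ∧ (∑ i, b i = 1) ∧
      (∀ i, 0 ≤ c i) ∧ (∑ i, c i = 1) ∧
      (∀ i, 0 ≤ d i) ∧ (∑ i, d i = 1) ∧
      ∀ i j, P i j = lam * a i * b j + (1 - lam) * c i * d j := by
  obtain ⟨b, ⟨hb, hb1⟩, hrow₀⟩ := exists_mem_stdSimplex_eq_sum_smul (hnonneg 0)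
  obtain ⟨d, ⟨hd, hd1⟩, hrow₁⟩ := exists_mem_stdSimplex_eq_sum_smul (hnonneg 1)
  obtain ⟨ha, ha1⟩ := single_mem_stdSimplex ℝ (0 : Fin 2)
  obtain ⟨hc, hc1⟩ := single_mem_stdSimplex ℝ (1 : Fin 2)
  have hmass : 1 - ∑ j, P 0 j = ∑ j, P 1 j := by
    rw [← hsum, Fin.sum_univ_two, add_sub_cancel_left]
  have hmass₀ : 0 ≤ ∑ j, P 0 j := sum_nonneg fun j _ => hnonneg 0 j
  have hmass₁ : 0 ≤ ∑ j, P 1 j := sum_nonneg fun j _ => hnonneg 1 j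
  refine ⟨∑ j, P 0 j, _, b, _, d, hmass₀, by linarith, ha, ha1, hb, hb1, hc, hc1, hd, hd1,
    fun i j => ?_⟩
  rw [hmass]
  fin_cases i
  · simpa using congrFun hrow₀ j
  · simpa using congrFun hrow₁ j
end
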